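/- Suppose m merges are performed on n nodes with no cuts, where the i-th merge has shorter merge path containing p_i nodes. Then Σᵢ (p_i − 1)² ≤ n(n−1)/2, and consequently Σᵢ p_i ≤ m + n√m; if additionally all merges are of leaves (so m < n), Σᵢ p_i = O(n^{3/2}). -/

import Mathlib

/-- `prel p a b` : `b` is the parent of `a`. -/
def prel (p : ℤ → Option ℤ) (a b : ℤ) : Prop := p a = some b

/-- `anc p a b` : `b` is an ancestor of `a` (including `a` itself). -/
def anc (p : ℤ → Option ℤ) (a b : ℤ) : Prop := Relation.ReflTransGen (prel p) a b

/-- `MergeStep p q v w` : the forest `q` is obtained from the forest `p` by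
`merge(v,w)`: the nodes of the root paths of `v` and `w` are rearranged into a
single chain in increasing (heap) order, all other parents unchanged. -/
def MergeStep (p q : ℤ → Option ℤ) (v w : ℤ) : Prop :=
  (∀ x : ℤ, ¬ (anc p v x ∨ anc p w x) → q x = p x) ∧
  (∀ x : ℤ, (anc p v x ∨ anc p w x) →
    (∀ b : ℤ, q x = some b ↔ ((anc p v b ∨ anc p w b) ∧ b < x ∧
        ∀ z : ℤ, (anc p v z ∨ anc p w z) → z < x → z ≤ b)) ∧
    (q x = none ↔ ∀ z : ℤ, (anc p v z ∨ anc p w z) → ¬ z < x))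

/-- `IsLeafNode p v` : `v` has no children. -/
def IsLeafNode (p : ℤ → Option ℤ) (v : ℤ) : Prop := ∀ x : ℤ, p x ≠ some v

/-- `mergePathV p v w` : the node set of the merge path of `v` in `merge(v,w)`,
i.e. the nodes of the path from `v` up to the nearest common ancestor of `v` and
`w` (in a heap-ordered forest, a common ancestor is a common upper bound, and the
nca is the least of them), or the whole root path of `v` if there is no common
ancestor. -/
def mergePathV (p : ℤ → Option ℤ) (v w : ℤ) : Set ℤ :=
  {z | anc p v z ∧ ∀ y : ℤ, anc p v y → anc p w y → z ≤ y}

/-!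
Take as potential the number of ordered pairs of distinct nodes of which neither is an ancestor
of the other. Merging never separates related nodes. When `v` and `w` lie in different trees,
every node of the root path of `v` and every node of the root path of `w` become related, so the
potential drops by at least twice the product of the two path lengths, hence by `2 (pᵢ - 1)²`;
when they share an ancestor, `pᵢ ≤ 1`. As the potential starts at most at `n (n - 1)`, this
bounds `∑ (pᵢ - 1)²`, and Cauchy–Schwarz turns that into the bound on `∑ pᵢ`.
-/

open Finset

section Forest

variable {p q : ℤ → Option ℤ}

lemma anc_le (hheap : ∀ x b, p x = some b → b < x) {a b : ℤ} (h : anc p a b) : b ≤ a := by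
  induction h with
  | refl => exact le_rfl
  | tail _ e ih => exact (hheap _ _ e).le.trans ih

lemma anc_mem {V : Finset ℤ} (hdom : ∀ x b, p x = some b → x ∈ V ∧ b ∈ V) {a b : ℤ}
    (ha : a ∈ V) (h : anc p a b) : b ∈ V := by
  induction h with
  | refl => exact ha
  | tail _ e => exact (hdom _ _ e).2

lemma anc_total {a b c : ℤ} (hb : anc p a b) (hc : anc p a c) : anc p b c ∨ anc p c b :=
  Relation.ReflTransGen.total_of_right_unique
    (fun _ _ _ hy hz => Option.some.inj ((Eq.symm hy).trans hz)) hb hc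

variable {v w : ℤ}

lemma MergeStep.anc_of_le (hms : MergeStep p q v w) {x b : ℤ} (hx : anc p v x ∨ anc p w x)
    (hb : anc p v b ∨ anc p w b) (hbx : b ≤ x) : anc q x b := by
  -- `q x` is the largest root-path node below `x`, so it lies between `b` and `x`.
  induction hn : (x - b).toNat using Nat.strong_induction_on generalizing x with
  | _ n ih =>
    rcases hbx.eq_or_lt with rfl | hlt
    · exact .refl
    obtain ⟨b', hq⟩ := Option.ne_none_iff_exists'.mp
      fun hnone => (hms.2 x hx).2.mp hnone b hb hlt
    obtain ⟨hb', hb'x, hmax⟩ := ((hms.2 x hx).1 b').mp hq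
    exact .head hq (ih _ (by omega) hb' (hmax b hb hlt) rfl)

lemma MergeStep.anc_of_anc (hms : MergeStep p q v w) (hheap : ∀ x b, p x = some b → b < x)
    {a b : ℤ} (h : anc p a b) : anc q a b := by
  induction h with
  | refl => exact .refl
  | @tail c d _ e ih =>
    by_cases hc : anc p v c ∨ anc p w c
    · have hd : anc p v d ∨ anc p w d := hc.imp (·.tail e) (·.tail e)
      exact ih.trans (hms.anc_of_le hc hd (hheap _ _ e).le)
    · exact ih.tail ((hms.1 c hc).trans e)

end Forest

section MergePath

variable {p : ℤ → Option ℤ} {v w : ℤ}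

lemma mergePathV_eq_of_not_anc (hc : ∀ y, anc p v y → ¬ anc p w y) :
    mergePathV p v w = {z | anc p v z} :=
  Set.ext fun _ => ⟨And.left, fun hz => ⟨hz, fun y hv hw => absurd hw (hc y hv)⟩⟩

-- Ancestors carry smaller keys, so the only such node is the root of the common tree.
lemma mergePathV_subsingleton (hheap : ∀ x b, p x = some b → b < x) {y : ℤ}
    (hvy : anc p v y) (hwy : anc p w y) : (mergePathV p v w).Subsingleton := by
  have hcommon : ∀ z ∈ mergePathV p v w, anc p v z ∧ anc p w z := by
    rintro z ⟨hvz, hmin⟩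
    rcases anc_total hvz hvy with hzy | hyz
    · obtain rfl : z = y := le_antisymm (hmin y hvy hwy) (anc_le hheap hzy)
      exact ⟨hvy, hwy⟩
    · exact ⟨hvz, hwy.trans hyz⟩
  intro a ha b hb
  exact le_antisymm (ha.2 b (hcommon b hb).1 (hcommon b hb).2)
    (hb.2 a (hcommon a ha).1 (hcommon a ha).2)

end MergePath

section UnrelatedPairs

open Classical

noncomputable def unrelatedPairs (V : Finset ℤ) (p : ℤ → Option ℤ) : Finset (ℤ × ℤ) :=
  V.offDiag.filter fun z => ¬ anc p z.1 z.2 ∧ ¬ anc p z.2 z.1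

variable {V : Finset ℤ} {p q : ℤ → Option ℤ}

lemma mem_unrelatedPairs {z : ℤ × ℤ} :
    z ∈ unrelatedPairs V p ↔
      z.1 ∈ V ∧ z.2 ∈ V ∧ z.1 ≠ z.2 ∧ ¬ anc p z.1 z.2 ∧ ¬ anc p z.2 z.1 := by
  simp [unrelatedPairs, and_assoc]

lemma swap_mem_unrelatedPairs {z : ℤ × ℤ} :
    z.swap ∈ unrelatedPairs V p ↔ z ∈ unrelatedPairs V p := by
  simp only [mem_unrelatedPairs, Prod.fst_swap, Prod.snd_swap, ne_comm]
  tauto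

lemma card_unrelatedPairs_le : #(unrelatedPairs V p) ≤ #V * (#V - 1) := by
  rw [Nat.mul_sub_one, ← offDiag_card]
  exact card_filter_le _ _

variable {v w : ℤ}

lemma MergeStep.unrelatedPairs_subset (hms : MergeStep p q v w)
    (hheap : ∀ x b, p x = some b → b < x) : unrelatedPairs V q ⊆ unrelatedPairs V p := by
  intro z hz
  simp only [mem_unrelatedPairs] at hz ⊢
  obtain ⟨h1, h2, hne, h12, h21⟩ := hz
  exact ⟨h1, h2, hne, mt (hms.anc_of_anc hheap) h12, mt (hms.anc_of_anc hheap) h21⟩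

lemma MergeStep.mem_unrelatedPairs_sdiff (hms : MergeStep p q v w)
    (hdom : ∀ x b, p x = some b → x ∈ V ∧ b ∈ V) (hv : v ∈ V) (hw : w ∈ V)
    (hc : ∀ y, anc p v y → ¬ anc p w y) {a b : ℤ} (ha : anc p v a) (hb : anc p w b) :
    (a, b) ∈ unrelatedPairs V p \ unrelatedPairs V q := by
  rw [mem_sdiff, mem_unrelatedPairs, mem_unrelatedPairs]
  refine ⟨⟨anc_mem hdom hv ha, anc_mem hdom hw hb, ?_, fun hab => hc b (ha.trans hab) hb,
    fun hba => hc a ha (hb.trans hba)⟩, fun h => ?_⟩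
  · intro hab
    simp only at hab
    subst hab
    exact hc a ha hb
  · rcases le_total a b with hab | hba
    · exact h.2.2.2.2 (hms.anc_of_le (.inr hb) (.inl ha) hab)
    · exact h.2.2.2.1 (hms.anc_of_le (.inl ha) (.inr hb) hba)

-- Each pair of a node above `v` and a node above `w` is counted in both orders.
lemma MergeStep.card_unrelatedPairs_add_le_of_not_anc (hms : MergeStep p q v w)
    (hdom : ∀ x b, p x = some b → x ∈ V ∧ b ∈ V) (hheap : ∀ x b, p x = some b → b < x)
    (hv : v ∈ V) (hw : w ∈ V) (hc : ∀ y, anc p v y → ¬ anc p w y) :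
    #(unrelatedPairs V q) + 2 * (#(V.filter (anc p v)) * #(V.filter (anc p w))) ≤
      #(unrelatedPairs V p) := by
  set A := V.filter (anc p v)
  set B := V.filter (anc p w)
  have hA : ∀ {a}, a ∈ A → anc p v a := fun ha => (mem_filter.mp ha).2
  have hB : ∀ {b}, b ∈ B → anc p w b := fun hb => (mem_filter.mp hb).2
  have hdisj : Disjoint (A ×ˢ B) (B ×ˢ A) :=
    disjoint_product.mpr (.inl (disjoint_left.mpr fun _ ha hb => hc _ (hA ha) (hB hb)))
  have hnew : A ×ˢ B ∪ B ×ˢ A ⊆ unrelatedPairs V p \ unrelatedPairs V q := by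
    rintro ⟨a, b⟩ hz
    rcases mem_union.mp hz with hab | hba
    · obtain ⟨ha, hb⟩ := mem_product.mp hab
      exact hms.mem_unrelatedPairs_sdiff hdom hv hw hc (hA ha) (hB hb)
    · obtain ⟨hb, ha⟩ := mem_product.mp hba
      have := hms.mem_unrelatedPairs_sdiff hdom hv hw hc (hA ha) (hB hb)
      simp only [mem_sdiff] at this ⊢
      exact ⟨swap_mem_unrelatedPairs.mp this.1, mt swap_mem_unrelatedPairs.mpr this.2⟩
  have hcard := card_le_card hnew
  rw [card_union_of_disjoint hdisj, card_product, card_product, mul_comm #B] at hcard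
  have := card_sdiff_add_card_eq_card (hms.unrelatedPairs_subset (V := V) hheap)
  omega

lemma MergeStep.card_unrelatedPairs_add_le (hms : MergeStep p q v w)
    (hdom : ∀ x b, p x = some b → x ∈ V ∧ b ∈ V) (hheap : ∀ x b, p x = some b → b < x)
    (hv : v ∈ V) (hw : w ∈ V) :
    #(unrelatedPairs V q) +
        2 * (min (mergePathV p v w).ncard (mergePathV p w v).ncard - 1) ^ 2 ≤
      #(unrelatedPairs V p) := by
  by_cases hc : ∃ y, anc p v y ∧ anc p w y
  · obtain ⟨y, hvy, hwy⟩ := hc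
    have hle : (mergePathV p v w).ncard ≤ 1 :=
      have hsub := mergePathV_subsingleton hheap hvy hwy
      (Set.ncard_le_one hsub.finite).mpr hsub
    have hzero : min (mergePathV p v w).ncard (mergePathV p w v).ncard - 1 = 0 := by omega
    rw [hzero]
    simpa using card_le_card (hms.unrelatedPairs_subset hheap)
  · push Not at hc
    have hpath : ∀ {u u'}, u ∈ V → (∀ y, anc p u y → ¬ anc p u' y) →
        (mergePathV p u u').ncard = #(V.filter (anc p u)) := fun hu hdisj => by
      rw [mergePathV_eq_of_not_anc hdisj, ← Set.ncard_coe_finset, coe_filter]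
      exact congrArg Set.ncard (Set.ext fun z => ⟨fun hz => ⟨anc_mem hdom hu hz, hz⟩, And.right⟩)
    rw [hpath hv hc, hpath hw fun y hwy hvy => hc y hvy hwy]
    have hsq : ∀ k l : ℕ, (min k l - 1) ^ 2 ≤ k * l := fun k l =>
      (sq (min k l - 1)).trans_le (Nat.mul_le_mul (by omega) (by omega))
    have := hms.card_unrelatedPairs_add_le_of_not_anc hdom hheap hv hw hc
    have := hsq (#(V.filter (anc p v))) (#(V.filter (anc p w)))
    omega

end UnrelatedPairs

lemma sum_range_add_le_of_add_le {M : Type*} [AddCommMonoid M] [PartialOrder M]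
    [IsOrderedAddMonoid M] {u d : ℕ → M} {m : ℕ} (h : ∀ i < m, u (i + 1) + d i ≤ u i) :
    ∑ i ∈ range m, d i + u m ≤ u 0 := by
  induction m with
  | zero => simp
  | succ j ih =>
    calc ∑ i ∈ range (j + 1), d i + u (j + 1) = ∑ i ∈ range j, d i + (u (j + 1) + d j) := by
          rw [sum_range_succ, add_assoc, add_comm (d j)]
      _ ≤ ∑ i ∈ range j, d i + u j := by gcongr; exact h j j.lt_succ_self
      _ ≤ u 0 := ih fun i hi => h i (hi.trans j.lt_succ_self)

lemma sum_le_mul_sqrt_card_of_sum_sq_le {ι : Type*} (s : Finset ι) (f : ι → ℝ) {B : ℝ}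
    (hB : 0 ≤ B) (h : ∑ i ∈ s, f i ^ 2 ≤ B ^ 2) : ∑ i ∈ s, f i ≤ B * Real.sqrt #s := by
  have hcs : (∑ i ∈ s, f i) ^ 2 ≤ (B * Real.sqrt #s) ^ 2 := by
    rw [mul_pow, Real.sq_sqrt (Nat.cast_nonneg _), mul_comm]
    exact sq_sum_le_card_mul_sum_sq.trans (by gcongr)
  exact (abs_le_of_sq_le_sq' hcs (by positivity)).2

lemma cast_sum_le_card_add_mul_sqrt_card {ι : Type*} (s : Finset ι) (a : ι → ℕ) {B : ℝ}
    (hB : 0 ≤ B) (h : ∑ i ∈ s, ((a i - 1 : ℕ) : ℝ) ^ 2 ≤ B ^ 2) :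
    ((∑ i ∈ s, a i : ℕ) : ℝ) ≤ #s + B * Real.sqrt #s :=
  calc ((∑ i ∈ s, a i : ℕ) : ℝ) ≤ ∑ i ∈ s, (1 + ((a i - 1 : ℕ) : ℝ)) := by
        push_cast
        gcongr with i
        exact_mod_cast (by omega : a i ≤ 1 + (a i - 1))
    _ = #s + ∑ i ∈ s, ((a i - 1 : ℕ) : ℝ) := by simp [sum_add_distrib]
    _ ≤ #s + B * Real.sqrt #s := by gcongr; exact sum_le_mul_sqrt_card_of_sum_sq_le s _ hB h

theorem shorter_merge_paths_bound_general (V : Finset ℤ) (m : ℕ) (F : ℕ → ℤ → Option ℤ)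
    (v w : ℕ → ℤ) (p : ℕ → ℕ)
    (hdom : ∀ i x b, F i x = some b → x ∈ V ∧ b ∈ V)
    (hheap : ∀ i x b, F i x = some b → b < x)
    (hstep : ∀ i < m, v i ∈ V ∧ w i ∈ V ∧ MergeStep (F i) (F (i + 1)) (v i) (w i))
    (hp : ∀ i < m, p i = min (mergePathV (F i) (v i) (w i)).ncard
                           (mergePathV (F i) (w i) (v i)).ncard) :
    (∑ i ∈ Finset.range m, (p i - 1) ^ 2) ≤ V.card * (V.card - 1) / 2 ∧
    ((∑ i ∈ Finset.range m, p i : ℕ) : ℝ) ≤ (m : ℝ) + (V.card : ℝ) * Real.sqrt m ∧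
    ((∀ i < m, IsLeafNode (F i) (v i) ∧ IsLeafNode (F i) (w i)) → m < V.card →
      ((∑ i ∈ Finset.range m, p i : ℕ) : ℝ) ≤
        (V.card : ℝ) + (V.card : ℝ) * Real.sqrt V.card) := by
  have hpotential : ∑ i ∈ range m, 2 * (p i - 1) ^ 2 + #(unrelatedPairs V (F m)) ≤
      #(unrelatedPairs V (F 0)) :=
    sum_range_add_le_of_add_le (u := fun i => #(unrelatedPairs V (F i)))
      (d := fun i => 2 * (p i - 1) ^ 2) fun i hi => by
      obtain ⟨hv, hw, hms⟩ := hstep i hi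
      rw [hp i hi]
      exact hms.card_unrelatedPairs_add_le (hdom i) (hheap i) hv hw
  have hsq : ∑ i ∈ range m, (p i - 1) ^ 2 ≤ #V * (#V - 1) / 2 := by
    rw [Nat.le_div_iff_mul_le two_pos, mul_comm, mul_sum]
    have := card_unrelatedPairs_le (V := V) (p := F 0)
    omega
  have hsq_real : ∑ i ∈ range m, ((p i - 1 : ℕ) : ℝ) ^ 2 ≤ (#V : ℝ) ^ 2 := by
    have : #V * (#V - 1) / 2 ≤ #V ^ 2 :=
      (Nat.div_le_self _ _).trans (sq #V ▸ Nat.mul_le_mul_left _ (Nat.sub_le _ _))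
    exact_mod_cast hsq.trans this
  have hsum := cast_sum_le_card_add_mul_sqrt_card (range m) p (Nat.cast_nonneg _) hsq_real
  rw [card_range] at hsum
  refine ⟨hsq, hsum, fun _ hmn => hsum.trans ?_⟩
  have hmn' : (m : ℝ) ≤ #V := by exact_mod_cast hmn.le
  gcongr

/-- If `m` merges are performed on `n` nodes with no cuts, with the `i`-th merge
having shorter merge path of `pᵢ` nodes, then `∑ᵢ (pᵢ − 1)² ≤ n(n−1)/2`, hence
`∑ᵢ pᵢ ≤ m + n·√m`; and if all merges are of leaves (so `m < n`), then
`∑ᵢ pᵢ ≤ n + n·√n = O(n^{3/2})`. -/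
theorem shorter_merge_paths_bound (V : Finset ℤ) (m : ℕ) (F : ℕ → ℤ → Option ℤ)
    (v w : ℕ → ℤ) (p : ℕ → ℕ)
    (h0 : ∀ x : ℤ, F 0 x = none)
    (hdom : ∀ i x b, F i x = some b → x ∈ V ∧ b ∈ V)
    (hheap : ∀ i x b, F i x = some b → b < x)
    (hstep : ∀ i < m, v i ∈ V ∧ w i ∈ V ∧ MergeStep (F i) (F (i + 1)) (v i) (w i))
    (hp : ∀ i < m, p i = min (mergePathV (F i) (v i) (w i)).ncard
                           (mergePathV (F i) (w i) (v i)).ncard) :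
    (∑ i ∈ Finset.range m, (p i - 1) ^ 2) ≤ V.card * (V.card - 1) / 2 ∧
    ((∑ i ∈ Finset.range m, p i : ℕ) : ℝ) ≤ (m : ℝ) + (V.card : ℝ) * Real.sqrt m ∧
    ((∀ i < m, IsLeafNode (F i) (v i) ∧ IsLeafNode (F i) (w i)) → m < V.card →
      ((∑ i ∈ Finset.range m, p i : ℕ) : ℝ) ≤
        (V.card : ℝ) + (V.card : ℝ) * Real.sqrt V.card) :=
  shorter_merge_paths_bound_general V m F v w p hdom hheap hstep hp
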